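/- arXiv:1903.11582 — 2 statements merged into one kernel-verified Lean document; each statement's English description precedes it below -/
import Mathlib

section
/- In the continuous balance-point setting, assume in addition that G is continuous on [0, b₁) and on I₃. Then for every w ∈ I₃ and every ε > 0 there exists ε₁ ∈ (0, ε] such that: if v*_{R,ε}(w) ∈ (0, b₁), then T(v*_{R,ε}(w), w; G) < G(v*_{R,ε}(w)) − ε₁; and if v*_{L,ε}(w) ∈ (0, b₁), then G(v*_{L,ε}(w)) < T(v*_{L,ε}(w), w; G) − ε₁. -/
open MeasureTheory Set Filter Topology

/-- `I_T = I₁ ∪ I₂ ∪ I₃ = (0,b₁) ∪ [b₁,b₂] ∪ (b₂,b₃)`, where `b₃` may be `+∞`. -/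
def ITset (b₁ b₂ : ℝ) (b₃ : EReal) : Set ℝ :=
  Ioo 0 b₁ ∪ Icc b₁ b₂ ∪ {y : ℝ | b₂ < y ∧ (y : EReal) < b₃}

/-- The conditioning set `[v,w] ∩ (I_T ∪ {0})` (with possibly infinite right endpoint). -/
def condSet (b₁ b₂ : ℝ) (b₃ : EReal) (v : ℝ) (w : EReal) : Set ℝ :=
  {y : ℝ | v ≤ y ∧ (y : EReal) ≤ w} ∩ (ITset b₁ b₂ b₃ ∪ {0})

/-- The conditional expectation `T(v,w;G) = E[G(Y) | Y ∈ [v,w] ∩ (I_T ∪ {0})]`,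
where `μ` is the law of `Y`. -/
noncomputable def condT (b₁ b₂ : ℝ) (b₃ : EReal) (G : ℝ → ℝ) (μ : Measure ℝ)
    (v : ℝ) (w : EReal) : ℝ :=
  (∫ y in condSet b₁ b₂ b₃ v w, G y ∂μ) / (μ (condSet b₁ b₂ b₃ v w)).toReal

/-- `V_{R,ε}(w) = {v ∈ I₁ : T(v,w;G) < G(v⁻) − ε}`. -/
noncomputable def VR (b₁ b₂ : ℝ) (b₃ : EReal) (G : ℝ → ℝ) (μ : Measure ℝ)
    (ε : ℝ) (w : EReal) : Set ℝ :=
  {v | v ∈ Ioo 0 b₁ ∧ condT b₁ b₂ b₃ G μ v w < Function.leftLim G v - ε}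

open Classical in
/-- `v*_{R,ε}(w)`. -/
noncomputable def vstarR (b₁ b₂ : ℝ) (b₃ : EReal) (G : ℝ → ℝ) (μ : Measure ℝ)
    (ε : ℝ) (w : EReal) : ℝ :=
  if (VR b₁ b₂ b₃ G μ ε w).Nonempty then sInf (VR b₁ b₂ b₃ G μ ε w) else b₁

/-- The left balance point `v*(w) = v*_{R,0}(w)`. -/
noncomputable def vstar (b₁ b₂ : ℝ) (b₃ : EReal) (G : ℝ → ℝ) (μ : Measure ℝ)
    (w : EReal) : ℝ :=
  vstarR b₁ b₂ b₃ G μ 0 w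

/-- `W_{L,ε} = {w ∈ I₃ : T(v*(w),w;G) > G(w⁺) + ε}`. -/
noncomputable def WL (b₁ b₂ : ℝ) (b₃ : EReal) (G : ℝ → ℝ) (μ : Measure ℝ)
    (ε : ℝ) : Set ℝ :=
  {w : ℝ | (b₂ < w ∧ (w : EReal) < b₃) ∧
    Function.rightLim G w + ε < condT b₁ b₂ b₃ G μ (vstar b₁ b₂ b₃ G μ w) w}

open Classical in
/-- `w*_{L,ε}` (an extended real, since `W_{L,ε}` may be unbounded when `b₃ = ∞`). -/
noncomputable def wstarL (b₁ b₂ : ℝ) (b₃ : EReal) (G : ℝ → ℝ) (μ : Measure ℝ)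
    (ε : ℝ) : EReal :=
  if (WL b₁ b₂ b₃ G μ ε).Nonempty
  then sSup ((fun x : ℝ => (x : EReal)) '' WL b₁ b₂ b₃ G μ ε)
  else (b₂ : EReal)

/-- The right balance point `w* = w*_{L,0}`. -/
noncomputable def wstar (b₁ b₂ : ℝ) (b₃ : EReal) (G : ℝ → ℝ) (μ : Measure ℝ) : EReal :=
  wstarL b₁ b₂ b₃ G μ 0

/-- `v* = v*(w*)`. -/
noncomputable def vstarstar (b₁ b₂ : ℝ) (b₃ : EReal) (G : ℝ → ℝ) (μ : Measure ℝ) : ℝ :=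
  vstar b₁ b₂ b₃ G μ (wstar b₁ b₂ b₃ G μ)

/-- `V_{L,ε}(w) = {v ∈ I₁ : G(v) < T(v*(w),w;G) − ε}`. -/
noncomputable def VL (b₁ b₂ : ℝ) (b₃ : EReal) (G : ℝ → ℝ) (μ : Measure ℝ)
    (ε : ℝ) (w : EReal) : Set ℝ :=
  {v | v ∈ Ioo 0 b₁ ∧ G v < condT b₁ b₂ b₃ G μ (vstar b₁ b₂ b₃ G μ w) w - ε}

open Classical in
/-- `v*_{L,ε}(w)`. -/
noncomputable def vstarL (b₁ b₂ : ℝ) (b₃ : EReal) (G : ℝ → ℝ) (μ : Measure ℝ)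
    (ε : ℝ) (w : EReal) : ℝ :=
  if (VL b₁ b₂ b₃ G μ ε w).Nonempty then sSup (VL b₁ b₂ b₃ G μ ε w) else 0

/-! Put `c = μ (b₂, w)` and `ε₁ = ε c / 2`. For `0 ≤ v ≤ v' ≤ b₁` the conditioning set of `v` is
`[v, v') ∪ condSet v'`, so `T(v, w)` is a weighted mean of `G` on `[v, v')` and of `T(v', w)`, the
latter with weight at least `c`, because `(b₂, w)` lies in every conditioning set. As `G` is
nondecreasing on `I₁`, every `v ∈ V_{R,ε}(w)` gives `T(v*_{R,ε}, w) ≤ G v - ε c`, and letting `v`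
decrease to `v*_{R,ε}` (continuity of `G`) gives `T(v*_{R,ε}, w) ≤ G(v*_{R,ε}) - ε c`. Dually,
continuity gives `G(v*_{L,ε}) + ε ≤ T(v*, w)`; if `v*_{L,ε} ≤ v*` the same splitting gives
`G(v*_{L,ε}) + ε c ≤ T(v*_{L,ε}, w)`, and if `v* < v*_{L,ε}` the mean `T(v*, w)` exceeds `G` on
`[v*, v*_{L,ε})`, so it is at most `T(v*_{L,ε}, w)`. -/

lemma MonotoneOn.Ico_of_continuousWithinAt {f : ℝ → ℝ} {a b : ℝ} (hf : MonotoneOn f (Ioo a b))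
    (ha : ContinuousWithinAt f (Ioo a b) a) : MonotoneOn f (Ico a b) := by
  intro x hx y hy hxy
  rcases hx.1.eq_or_lt with rfl | hax
  · rcases hxy.eq_or_lt with rfl | hxy
    · rfl
    exact ContinuousWithinAt.closure_le (closure_Ioo hxy.ne ▸ left_mem_Icc.2 hxy.le)
      (ha.mono (Ioo_subset_Ioo_right hy.2.le)) continuousWithinAt_const
      fun z hz => hf ⟨hz.1, hz.2.trans hy.2⟩ ⟨hxy, hy.2⟩ hz.2.le
  · exact hf ⟨hax, hx.2⟩ ⟨hax.trans_le hxy, hy.2⟩ hxy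

section ConditionalMean

variable {b₁ b₂ : ℝ} {b₃ : EReal}

lemma measurableSet_ITset : MeasurableSet (ITset b₁ b₂ b₃) :=
  (measurableSet_Ioo.union measurableSet_Icc).union
    (measurableSet_Ioi.inter (measurable_coe_real_ereal measurableSet_Iio))

lemma condSet_coe (v w : ℝ) :
    condSet b₁ b₂ b₃ v w = Icc v w ∩ (ITset b₁ b₂ b₃ ∪ {0}) := by
  simp [condSet, Icc_def]

lemma measurableSet_condSet (v w : ℝ) : MeasurableSet (condSet b₁ b₂ b₃ v w) := by
  rw [condSet_coe]
  exact measurableSet_Icc.inter (measurableSet_ITset.union (measurableSet_singleton 0))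

lemma condSet_eq_Ico_union {v v' w : ℝ} (hv : 0 ≤ v) (hvv' : v ≤ v') (hv' : v' ≤ b₁)
    (hw : b₁ ≤ w) : condSet b₁ b₂ b₃ v w = Ico v v' ∪ condSet b₁ b₂ b₃ v' w := by
  rw [condSet_coe, condSet_coe, ← Ico_union_Icc_eq_Icc hvv' (hv'.trans hw),
    union_inter_distrib_right, inter_eq_left.2]
  intro y hy
  rcases (hv.trans hy.1).eq_or_lt with rfl | hy₀
  · exact Or.inr rfl
  · exact Or.inl (Or.inl (Or.inl ⟨hy₀, hy.2.trans_le hv'⟩))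

lemma disjoint_Ico_condSet (v v' : ℝ) (w : EReal) :
    Disjoint (Ico v v') (condSet b₁ b₂ b₃ v' w) :=
  Set.disjoint_left.2 fun _ hy hy' => (not_le.2 hy.2) hy'.1.1

lemma Ioo_subset_condSet {v w : ℝ} (hv : v ≤ b₂) (hw : (w : EReal) < b₃) :
    Ioo b₂ w ⊆ condSet b₁ b₂ b₃ v w := fun _ hy =>
  ⟨⟨hv.trans hy.1.le, EReal.coe_le_coe_iff.2 hy.2.le⟩,
    Or.inl (Or.inr ⟨hy.1, (EReal.coe_lt_coe_iff.2 hy.2).trans hw⟩)⟩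

variable {G : ℝ → ℝ} {μ : Measure ℝ}

lemma condT_neg (v : ℝ) (w : EReal) :
    condT b₁ b₂ b₃ (fun y => -G y) μ v w = -condT b₁ b₂ b₃ G μ v w := by
  simp only [condT, integral_neg, neg_div]

lemma setIntegral_condSet_eq_condT_mul [IsFiniteMeasure μ] (v : ℝ) (w : EReal) :
    ∫ y in condSet b₁ b₂ b₃ v w, G y ∂μ
      = condT b₁ b₂ b₃ G μ v w * (μ (condSet b₁ b₂ b₃ v w)).toReal := by
  by_cases h : μ (condSet b₁ b₂ b₃ v w) = 0
  · simp [Measure.restrict_eq_zero.2 h, h]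
  · rw [condT, div_mul_cancel₀]
    exact ENNReal.toReal_ne_zero.2 ⟨h, measure_ne_top _ _⟩

variable [IsProbabilityMeasure μ]

lemma condT_le_sub_of_le_on_Ico (hG : Integrable G μ) {v v' w L δ : ℝ} (hv : 0 ≤ v)
    (hvv' : v ≤ v') (hv' : v' ≤ b₁) (hb₁₂ : b₁ < b₂) (hw : (w : EReal) < b₃)
    (hc : 0 < μ (Ioo b₂ w)) (hδ : 0 ≤ δ) (hGL : ∀ y ∈ Ico v v', G y ≤ L)
    (hT : condT b₁ b₂ b₃ G μ v' w ≤ L - δ) :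
    condT b₁ b₂ b₃ G μ v w ≤ L - δ * (μ (Ioo b₂ w)).toReal := by
  have hb₂w : b₂ < w := nonempty_Ioo.1 (nonempty_of_measure_ne_zero hc.ne')
  have hsplit : condSet b₁ b₂ b₃ v w = Ico v v' ∪ condSet b₁ b₂ b₃ v' w :=
    condSet_eq_Ico_union hv hvv' hv' (hb₁₂.trans hb₂w).le
  have hdisj := disjoint_Ico_condSet (b₁ := b₁) (b₂ := b₂) (b₃ := b₃) v v' w
  set c := (μ (Ioo b₂ w)).toReal
  set m₁ := (μ (Ico v v')).toReal
  set m₂ := (μ (condSet b₁ b₂ b₃ v' w)).toReal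
  have hm : (μ (condSet b₁ b₂ b₃ v w)).toReal = m₁ + m₂ := by
    rw [hsplit, measure_union hdisj (measurableSet_condSet v' w),
      ENNReal.toReal_add (measure_ne_top _ _) (measure_ne_top _ _)]
  have hI : ∫ y in condSet b₁ b₂ b₃ v w, G y ∂μ
      = (∫ y in Ico v v', G y ∂μ) + condT b₁ b₂ b₃ G μ v' w * m₂ := by
    rw [hsplit, setIntegral_union hdisj (measurableSet_condSet v' w) hG.integrableOn
      hG.integrableOn, setIntegral_condSet_eq_condT_mul]
  have hI₁ : ∫ y in Ico v v', G y ∂μ ≤ L * m₁ := by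
    simpa [mul_comm, measureReal_def] using setIntegral_mono_on hG.integrableOn
      (integrableOn_const (measure_ne_top μ _) enorm_ne_top) measurableSet_Ico hGL
  have hc₀ : 0 < c := ENNReal.toReal_pos hc.ne' (measure_ne_top _ _)
  have hcm₂ : c ≤ m₂ := ENNReal.toReal_mono (measure_ne_top _ _)
    (measure_mono (Ioo_subset_condSet (hv'.trans hb₁₂.le) hw))
  have hm₁ : 0 ≤ m₁ := ENNReal.toReal_nonneg
  have hm_le : m₁ + m₂ ≤ 1 := hm ▸ measureReal_le_one
  rw [condT, hI, hm, div_le_iff₀ (by linarith)]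
  -- the weight `m₂` of `condSet v'` is at least `c ≥ c (m₁ + m₂)`
  nlinarith [mul_le_mul_of_nonneg_right hT (hc₀.le.trans hcm₂),
    mul_le_mul_of_nonneg_left hm_le (mul_nonneg hδ hc₀.le), mul_le_mul_of_nonneg_left hcm₂ hδ]

lemma add_le_condT_of_le_on_Ico (hG : Integrable G μ) {v v' w L δ : ℝ} (hv : 0 ≤ v)
    (hvv' : v ≤ v') (hv' : v' ≤ b₁) (hb₁₂ : b₁ < b₂) (hw : (w : EReal) < b₃)
    (hc : 0 < μ (Ioo b₂ w)) (hδ : 0 ≤ δ) (hGL : ∀ y ∈ Ico v v', L ≤ G y)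
    (hT : L + δ ≤ condT b₁ b₂ b₃ G μ v' w) :
    L + δ * (μ (Ioo b₂ w)).toReal ≤ condT b₁ b₂ b₃ G μ v w := by
  have h := condT_le_sub_of_le_on_Ico (G := fun y => -G y) (L := -L) hG.neg hv hvv' hv' hb₁₂ hw
    hc hδ (fun y hy => neg_le_neg (hGL y hy)) (by rw [condT_neg]; linarith)
  rw [condT_neg] at h
  linarith

end ConditionalMean

section BalancePoints

variable {b₁ b₂ : ℝ} {b₃ : EReal} {G : ℝ → ℝ} {μ : Measure ℝ} {ε : ℝ} {w : EReal}

lemma vstarR_eq_sInf (h : vstarR b₁ b₂ b₃ G μ ε w ∈ Ioo 0 b₁) :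
    (VR b₁ b₂ b₃ G μ ε w).Nonempty ∧ vstarR b₁ b₂ b₃ G μ ε w = sInf (VR b₁ b₂ b₃ G μ ε w) := by
  by_cases hne : (VR b₁ b₂ b₃ G μ ε w).Nonempty
  · exact ⟨hne, if_pos hne⟩
  · rw [vstarR, if_neg hne] at h
    exact (lt_irrefl _ h.2).elim

lemma vstarL_eq_sSup (h : vstarL b₁ b₂ b₃ G μ ε w ∈ Ioo 0 b₁) :
    (VL b₁ b₂ b₃ G μ ε w).Nonempty ∧ vstarL b₁ b₂ b₃ G μ ε w = sSup (VL b₁ b₂ b₃ G μ ε w) := by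
  by_cases hne : (VL b₁ b₂ b₃ G μ ε w).Nonempty
  · exact ⟨hne, if_pos hne⟩
  · rw [vstarL, if_neg hne] at h
    exact (lt_irrefl _ h.1).elim

lemma vstar_mem_Icc (hb₁ : 0 ≤ b₁) : vstar b₁ b₂ b₃ G μ w ∈ Icc 0 b₁ := by
  rw [vstar, vstarR]
  split_ifs with hne
  · obtain ⟨x, hx⟩ := hne
    exact ⟨le_csInf ⟨x, hx⟩ fun y hy => hy.1.1.le,
      (csInf_le ⟨0, fun y hy => hy.1.1.le⟩ hx).trans hx.1.2.le⟩
  · exact ⟨hb₁, le_rfl⟩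

variable [IsProbabilityMeasure μ] {w : ℝ}

lemma condT_vstarR_le (hG : Integrable G μ) (hG₁ : MonotoneOn G (Ioo 0 b₁))
    (hGc : ContinuousOn G (Ioo 0 b₁)) (hb₁₂ : b₁ < b₂) (hw : (w : EReal) < b₃)
    (hc : 0 < μ (Ioo b₂ w)) (hε : 0 ≤ ε) (hvR : vstarR b₁ b₂ b₃ G μ ε w ∈ Ioo 0 b₁) :
    condT b₁ b₂ b₃ G μ (vstarR b₁ b₂ b₃ G μ ε w) w
      ≤ G (vstarR b₁ b₂ b₃ G μ ε w) - ε * (μ (Ioo b₂ w)).toReal := by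
  obtain ⟨hne, hinf⟩ := vstarR_eq_sInf hvR
  set vR := vstarR b₁ b₂ b₃ G μ ε w
  have hbdd : BddBelow (VR b₁ b₂ b₃ G μ ε w) := ⟨0, fun _ hv => hv.1.1.le⟩
  have hbound : ∀ v ∈ VR b₁ b₂ b₃ G μ ε w,
      condT b₁ b₂ b₃ G μ vR w + ε * (μ (Ioo b₂ w)).toReal ≤ G v := by
    intro v hv
    have hTv : condT b₁ b₂ b₃ G μ v w ≤ G v - ε := by
      have h := hv.2
      rw [(hGc.continuousAt (Ioo_mem_nhds hv.1.1 hv.1.2)).continuousWithinAt.leftLim_eq] at h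
      exact h.le
    have := condT_le_sub_of_le_on_Ico hG hvR.1.le (hinf ▸ csInf_le hbdd hv) hv.1.2.le hb₁₂ hw hc
      hε (fun y hy => hG₁ ⟨hvR.1.trans_le hy.1, hy.2.trans hv.1.2⟩ hv.1 hy.2.le) hTv
    linarith
  have := ContinuousWithinAt.closure_le (hinf ▸ csInf_mem_closure hne hbdd)
    continuousWithinAt_const (hGc.continuousAt (Ioo_mem_nhds hvR.1 hvR.2)).continuousWithinAt
    hbound
  linarith

lemma add_le_condT_vstarL (hG : Integrable G μ) (hG₁ : MonotoneOn G (Ico 0 b₁))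
    (hGc : ContinuousOn G (Ioo 0 b₁)) (hb₁₂ : b₁ < b₂) (hw : (w : EReal) < b₃)
    (hc : 0 < μ (Ioo b₂ w)) (hε : 0 < ε) (hvL : vstarL b₁ b₂ b₃ G μ ε w ∈ Ioo 0 b₁) :
    G (vstarL b₁ b₂ b₃ G μ ε w) + ε * (μ (Ioo b₂ w)).toReal
      ≤ condT b₁ b₂ b₃ G μ (vstarL b₁ b₂ b₃ G μ ε w) w := by
  obtain ⟨hne, hsup⟩ := vstarL_eq_sSup hvL
  set vL := vstarL b₁ b₂ b₃ G μ ε w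
  set vS := vstar b₁ b₂ b₃ G μ w
  have hvS : vS ∈ Icc 0 b₁ := vstar_mem_Icc (hvL.1.trans hvL.2).le
  have hbdd : BddAbove (VL b₁ b₂ b₃ G μ ε w) := ⟨b₁, fun _ hv => hv.1.2.le⟩
  have hGvL : G vL + ε ≤ condT b₁ b₂ b₃ G μ vS w := by
    have := ContinuousWithinAt.closure_le (hsup ▸ csSup_mem_closure hne hbdd)
      (hGc.continuousAt (Ioo_mem_nhds hvL.1 hvL.2)).continuousWithinAt continuousWithinAt_const
      fun v hv => hv.2.le
    linarith
  have hvL_mem : vL ∈ Ico 0 b₁ := Ioo_subset_Ico_self hvL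
  rcases le_or_gt vL vS with hle | hlt
  · exact add_le_condT_of_le_on_Ico hG hvL.1.le hle hvS.2 hb₁₂ hw hc hε.le
      (fun y hy => hG₁ hvL_mem ⟨hvL.1.le.trans hy.1, hy.2.trans_le hvS.2⟩ hy.1) hGvL
  · -- `T(v*, w)` is a mean of values `≤ max (G vL) (T(vL, w))`, and `G vL < T(v*, w)`
    have hmax := condT_le_sub_of_le_on_Ico (L := max (G vL) (condT b₁ b₂ b₃ G μ vL w)) hG hvS.1
      hlt.le hvL.2.le hb₁₂ hw hc le_rfl
      (fun y hy => (hG₁ ⟨hvS.1.trans hy.1, hy.2.trans hvL.2⟩ hvL_mem hy.2.le).trans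
        (le_max_left _ _)) (by simp)
    rw [zero_mul, sub_zero, le_max_iff] at hmax
    have hT := hmax.resolve_left (by linarith)
    have hεc : ε * (μ (Ioo b₂ w)).toReal ≤ ε := mul_le_of_le_one_right hε.le measureReal_le_one
    linarith

end BalancePoints

theorem statement14_general
    (b₁ b₂ : ℝ) (b₃ : EReal) (G : ℝ → ℝ) (μ : Measure ℝ)
    (hb₁₂ : b₁ < b₂)
    (hμ : IsProbabilityMeasure μ)
    (hGint : Integrable G μ)
    (hfull : ∀ a b : ℝ, a < b → Ioo a b ⊆ ITset b₁ b₂ b₃ → 0 < μ (Ioo a b))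
    (hG1 : MonotoneOn G (Ioo 0 b₁))
    (hGc1 : ContinuousOn G (Ico 0 b₁)) :
    ∀ w : ℝ, b₂ < w → (w : EReal) < b₃ → ∀ ε : ℝ, 0 < ε →
      ∃ ε₁ : ℝ, 0 < ε₁ ∧ ε₁ ≤ ε ∧
        (vstarR b₁ b₂ b₃ G μ ε (w : EReal) ∈ Ioo 0 b₁ →
          condT b₁ b₂ b₃ G μ (vstarR b₁ b₂ b₃ G μ ε (w : EReal)) (w : EReal)
            < G (vstarR b₁ b₂ b₃ G μ ε (w : EReal)) - ε₁) ∧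
        (vstarL b₁ b₂ b₃ G μ ε (w : EReal) ∈ Ioo 0 b₁ →
          G (vstarL b₁ b₂ b₃ G μ ε (w : EReal))
            < condT b₁ b₂ b₃ G μ (vstarL b₁ b₂ b₃ G μ ε (w : EReal)) (w : EReal) - ε₁) := by
  intro w hw₂ hw₃ ε hε
  have hc : 0 < μ (Ioo b₂ w) :=
    hfull b₂ w hw₂ fun y hy => Or.inr ⟨hy.1, (EReal.coe_lt_coe_iff.2 hy.2).trans hw₃⟩
  have hεc_pos : 0 < ε * (μ (Ioo b₂ w)).toReal :=
    mul_pos hε (ENNReal.toReal_pos hc.ne' (measure_ne_top _ _))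
  have hεc_le : ε * (μ (Ioo b₂ w)).toReal ≤ ε := mul_le_of_le_one_right hε.le measureReal_le_one
  have hGc : ContinuousOn G (Ioo 0 b₁) := hGc1.mono Ioo_subset_Ico_self
  refine ⟨ε * (μ (Ioo b₂ w)).toReal / 2, by linarith, by linarith, fun hvR => ?_, fun hvL => ?_⟩
  · linarith [condT_vstarR_le hGint hG1 hGc hb₁₂ hw₃ hc hε.le hvR]
  · have hG_mono : MonotoneOn G (Ico 0 b₁) :=
      hG1.Ico_of_continuousWithinAt ((hGc1 0 ⟨le_rfl, hvL.1.trans hvL.2⟩).mono Ioo_subset_Ico_self)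
    linarith [add_le_condT_vstarL hGint hG_mono hGc hb₁₂ hw₃ hc hε hvL]

theorem statement14
    (b₁ b₂ : ℝ) (b₃ : EReal) (G : ℝ → ℝ) (μ : Measure ℝ)
    (hb₁ : 0 ≤ b₁) (hb₁₂ : b₁ < b₂) (hb₂₃ : (b₂ : EReal) < b₃)
    (hμ : IsProbabilityMeasure μ) (hμneg : μ (Iio 0) = 0)
    (hGint : Integrable G μ)
    (hfull : ∀ a b : ℝ, a < b → Ioo a b ⊆ ITset b₁ b₂ b₃ → 0 < μ (Ioo a b))
    (hG1 : MonotoneOn G (Ioo 0 b₁))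
    (hG2 : StrictAntiOn G (Icc b₁ b₂))
    (hG3 : MonotoneOn G {y : ℝ | b₂ < y ∧ (y : EReal) < b₃})
    (hGc1 : ContinuousOn G (Ico 0 b₁))
    (hGc3 : ContinuousOn G {y : ℝ | b₂ < y ∧ (y : EReal) < b₃}) :
    ∀ w : ℝ, b₂ < w → (w : EReal) < b₃ → ∀ ε : ℝ, 0 < ε →
      ∃ ε₁ : ℝ, 0 < ε₁ ∧ ε₁ ≤ ε ∧
        (vstarR b₁ b₂ b₃ G μ ε (w : EReal) ∈ Ioo 0 b₁ →
          condT b₁ b₂ b₃ G μ (vstarR b₁ b₂ b₃ G μ ε (w : EReal)) (w : EReal)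
            < G (vstarR b₁ b₂ b₃ G μ ε (w : EReal)) - ε₁) ∧
        (vstarL b₁ b₂ b₃ G μ ε (w : EReal) ∈ Ioo 0 b₁ →
          G (vstarL b₁ b₂ b₃ G μ ε (w : EReal))
            < condT b₁ b₂ b₃ G μ (vstarL b₁ b₂ b₃ G μ ε (w : EReal)) (w : EReal) - ε₁) :=
  statement14_general b₁ b₂ b₃ G μ hb₁₂ hμ hGint hfull hG1 hGc1
end

section
/- Let y ∈ ℝᵖ and let λ ∈ ℝᵖ have nonnegative nondecreasing entries. Then: (1) for every p×p permutation matrix Π, Prox_λ(Πy) = Π·Prox_λ(y); (2) for every coordinate i, [Prox_λ(y)]_i = sign(y_i)·[Prox_λ(|y|)]_i, where |y| = (|y_1|,…,|y_p|) and sign(t) equals 1 for t > 0, 0 for t = 0, and −1 for t < 0. In particular each coordinate [Prox_λ(y)]_i has the same sign as y_i. -/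
open MeasureTheory Filter Finset Topology

/-- The nondecreasing rearrangement of the absolute values of the entries of `x`. -/
noncomputable def sortedAbs {p : ℕ} (x : Fin p → ℝ) : Fin p → ℝ :=
  fun i => |x (Tuple.sort (fun j => |x j|) i)|

/-- The sorted ℓ1 norm `J_λ(x) = ∑ λ_i |x|_(i)`. -/
noncomputable def sortedL1 {p : ℕ} (lam x : Fin p → ℝ) : ℝ :=
  ∑ i, lam i * sortedAbs x i

/-- The SLOPE objective `(1/2)‖y - x‖² + J_λ(x)`. -/
noncomputable def slopeObj {p : ℕ} (lam y x : Fin p → ℝ) : ℝ :=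
  (1 / 2) * ∑ i, (y i - x i) ^ 2 + sortedL1 lam x

open Classical in
/-- The SLOPE proximal operator: the (unique) minimizer of the SLOPE objective. -/
noncomputable def slopeProx {p : ℕ} (lam y : Fin p → ℝ) : Fin p → ℝ :=
  if h : ∃ x : Fin p → ℝ, ∀ z : Fin p → ℝ, slopeObj lam y x ≤ slopeObj lam y z
  then h.choose else y

/-
Both identities come from symmetries of the SLOPE objective. A map `φ` of the form `x ↦ x ∘ e`
(`e` a permutation) or `x ↦ ε * x` (`|ε i| = 1`) preserves the sorted ℓ1 norm, so
`slopeObj lam (φ y) (φ x) = slopeObj lam y x`. The objective is strictly convex (a strictly convex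
quadratic plus a norm that is convex by the rearrangement inequality), so its minimizer is unique
and `slopeProx lam (φ y) = φ (slopeProx lam y)`. Choosing `ε = ±1` with `ε * y = |y|` gives the
sign identity away from the zeros of `y`; at a zero `y i = 0`, flipping the sign of coordinate `i`
alone fixes `y`, which forces `slopeProx lam y i = 0`.
-/

lemma StrictConvexOn.const_mul {E : Type*} [AddCommMonoid E] [Module ℝ E] {s : Set E}
    {f : E → ℝ} {c : ℝ} (hf : StrictConvexOn ℝ s f) (hc : 0 < c) :
    StrictConvexOn ℝ s fun x => c * f x := by
  refine ⟨hf.1, fun x hx z hz hxz a b ha hb hab => ?_⟩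
  have h := hf.2 hx hz hxz ha hb hab
  simp only [smul_eq_mul] at h ⊢
  nlinarith

lemma strictConvexOn_sum_sq_sub {ι : Type*} [Fintype ι] (y : ι → ℝ) :
    StrictConvexOn ℝ Set.univ fun x : ι → ℝ => ∑ i, (y i - x i) ^ 2 := by
  refine ⟨convex_univ, fun x _ z _ hxz a b ha hb hab => ?_⟩
  obtain ⟨j, hj⟩ := Function.ne_iff.mp hxz
  have gap (i : ι) : a * (y i - x i) ^ 2 + b * (y i - z i) ^ 2
      = (y i - (a * x i + b * z i)) ^ 2 + a * b * (x i - z i) ^ 2 := by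
    obtain rfl := eq_sub_of_add_eq' hab
    ring
  simp only [smul_eq_mul, Pi.add_apply, Pi.smul_apply, mul_sum, ← sum_add_distrib, gap]
  refine sum_lt_sum (fun i _ => ?_) ⟨j, mem_univ j, ?_⟩
  · nlinarith [mul_pos ha hb, sq_nonneg (x i - z i)]
  · have := mul_pos (mul_pos ha hb) (pow_pos (abs_pos.mpr (sub_ne_zero.mpr hj)) 2)
    rw [sq_abs] at this
    linarith

section Slope

variable {p : ℕ} {lam : Fin p → ℝ}

lemma sortedL1_congr_abs (lam : Fin p → ℝ) {x z : Fin p → ℝ} (h : ∀ i, |x i| = |z i|) :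
    sortedL1 lam x = sortedL1 lam z := by
  simp only [sortedL1, sortedAbs, h]

lemma sortedL1_comp_perm (lam x : Fin p → ℝ) (e : Equiv.Perm (Fin p)) :
    sortedL1 lam (x ∘ e) = sortedL1 lam x := by
  have h := Tuple.comp_perm_comp_sort_eq_comp_sort (f := fun j => |x j|) (σ := e)
  simp only [sortedL1, sortedAbs]
  exact sum_congr rfl fun i _ => congrArg (lam i * ·) (congrFun h i)

lemma sum_mul_abs_comp_perm_le_sortedL1 (hm : Monotone lam) (x : Fin p → ℝ)
    (σ : Equiv.Perm (Fin p)) :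
    ∑ i, lam i * |x (σ i)| ≤ sortedL1 lam x := by
  set τ := Tuple.sort fun j => |x j|
  have hmv : Monovary lam (sortedAbs x) := hm.monovary (Tuple.monotone_sort fun j => |x j|)
  calc ∑ i, lam i * |x (σ i)| = ∑ i, lam i * sortedAbs x ((σ.trans τ.symm) i) := by
        simp [sortedAbs, τ]
    _ ≤ sortedL1 lam x := hmv.sum_mul_comp_perm_le_sum_mul

lemma convexOn_sortedL1 (hn : ∀ i, 0 ≤ lam i) (hm : Monotone lam) :
    ConvexOn ℝ Set.univ (sortedL1 lam) := by
  refine ⟨convex_univ, fun x _ z _ a b ha hb hab => ?_⟩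
  set τ := Tuple.sort fun j => |(a • x + b • z) j|
  have hterm (i : Fin p) : lam i * |(a • x + b • z) (τ i)|
      ≤ a * (lam i * |x (τ i)|) + b * (lam i * |z (τ i)|) := by
    have := abs_add_le (a * x (τ i)) (b * z (τ i))
    rw [abs_mul, abs_mul, abs_of_nonneg ha, abs_of_nonneg hb] at this
    simp only [Pi.add_apply, Pi.smul_apply, smul_eq_mul]
    nlinarith [hn i]
  calc sortedL1 lam (a • x + b • z) = ∑ i, lam i * |(a • x + b • z) (τ i)| := rfl
    _ ≤ a * ∑ i, lam i * |x (τ i)| + b * ∑ i, lam i * |z (τ i)| := by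
        rw [mul_sum, mul_sum, ← sum_add_distrib]
        exact sum_le_sum fun i _ => hterm i
    _ ≤ a • sortedL1 lam x + b • sortedL1 lam z := by
        rw [smul_eq_mul, smul_eq_mul]
        gcongr <;> exact sum_mul_abs_comp_perm_le_sortedL1 hm _ τ

lemma strictConvexOn_slopeObj (hn : ∀ i, 0 ≤ lam i) (hm : Monotone lam) (y : Fin p → ℝ) :
    StrictConvexOn ℝ Set.univ (slopeObj lam y) :=
  ((strictConvexOn_sum_sq_sub y).const_mul one_half_pos).add_convexOn (convexOn_sortedL1 hn hm)

lemma slopeProx_eq_of_forall_le (hn : ∀ i, 0 ≤ lam i) (hm : Monotone lam) {y x : Fin p → ℝ}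
    (hx : ∀ z, slopeObj lam y x ≤ slopeObj lam y z) : slopeProx lam y = x := by
  have h : ∃ x, ∀ z, slopeObj lam y x ≤ slopeObj lam y z := ⟨x, hx⟩
  rw [slopeProx, dif_pos h]
  exact (strictConvexOn_slopeObj hn hm y).eq_of_isMinOn (isMinOn_univ_iff.mpr h.choose_spec)
    (isMinOn_univ_iff.mpr hx) trivial trivial

/-- Covers both branches of `slopeProx`: `φ` also transports the absence of a minimizer, and then
both sides are the fallback value `φ y`. -/
lemma slopeProx_map (hn : ∀ i, 0 ≤ lam i) (hm : Monotone lam) {y : Fin p → ℝ}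
    {φ : (Fin p → ℝ) → Fin p → ℝ} (hφ : Function.Surjective φ)
    (hobj : ∀ x, slopeObj lam (φ y) (φ x) = slopeObj lam y x) :
    slopeProx lam (φ y) = φ (slopeProx lam y) := by
  by_cases h : ∃ x, ∀ z, slopeObj lam y x ≤ slopeObj lam y z
  · obtain ⟨x, hx⟩ := h
    rw [slopeProx_eq_of_forall_le hn hm hx]
    exact slopeProx_eq_of_forall_le hn hm (hφ.forall.mpr fun z => by simpa only [hobj] using hx z)
  · have h' : ¬ ∃ u, ∀ z, slopeObj lam (φ y) u ≤ slopeObj lam (φ y) z := by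
      rintro ⟨u, hu⟩
      obtain ⟨x, rfl⟩ := hφ u
      exact h ⟨x, fun z => by simpa only [hobj] using hu (φ z)⟩
    rw [slopeProx, slopeProx, dif_neg h, dif_neg h']

lemma slopeObj_comp_perm (lam y x : Fin p → ℝ) (e : Equiv.Perm (Fin p)) :
    slopeObj lam (y ∘ e) (x ∘ e) = slopeObj lam y x := by
  rw [slopeObj, slopeObj, sortedL1_comp_perm]
  congr 2
  exact Equiv.sum_comp e fun i => (y i - x i) ^ 2

lemma slopeObj_mul_of_abs_eq_one (lam y x : Fin p → ℝ) {ε : Fin p → ℝ}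
    (hε : ∀ i, |ε i| = 1) :
    slopeObj lam (ε * y) (ε * x) = slopeObj lam y x := by
  have hsq (i : Fin p) : ε i ^ 2 = 1 := by rw [← sq_abs, hε i, one_pow]
  rw [slopeObj, slopeObj, sortedL1_congr_abs lam (z := x) fun i => by simp [abs_mul, hε i]]
  congr 2
  refine sum_congr rfl fun i _ => ?_
  simp only [Pi.mul_apply]
  linear_combination (y i - x i) ^ 2 * hsq i

lemma slopeProx_comp_perm (hn : ∀ i, 0 ≤ lam i) (hm : Monotone lam) (y : Fin p → ℝ)
    (e : Equiv.Perm (Fin p)) : slopeProx lam (y ∘ e) = slopeProx lam y ∘ e :=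
  slopeProx_map hn hm (φ := (· ∘ e)) (fun z => ⟨z ∘ e.symm, by ext; simp⟩)
    (slopeObj_comp_perm lam y · e)

lemma slopeProx_mul_of_abs_eq_one (hn : ∀ i, 0 ≤ lam i) (hm : Monotone lam) (y : Fin p → ℝ)
    {ε : Fin p → ℝ} (hε : ∀ i, |ε i| = 1) : slopeProx lam (ε * y) = ε * slopeProx lam y := by
  have hinv : Function.Involutive (ε * ·) := fun x => by
    ext i
    dsimp only
    rw [Pi.mul_apply, Pi.mul_apply, ← mul_assoc, ← abs_mul_abs_self, hε i, one_mul, one_mul]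
  exact slopeProx_map hn hm hinv.surjective fun x => slopeObj_mul_of_abs_eq_one lam y x hε

lemma slopeProx_apply_eq_zero (hn : ∀ i, 0 ≤ lam i) (hm : Monotone lam) {y : Fin p → ℝ}
    {i : Fin p} (hy : y i = 0) : slopeProx lam y i = 0 := by
  set ε : Fin p → ℝ := Function.update 1 i (-1)
  have hε (j : Fin p) : |ε j| = 1 := by
    rcases eq_or_ne j i with rfl | hj <;> simp [ε, *]
  have hεy : ε * y = y := by
    ext j
    rcases eq_or_ne j i with rfl | hj <;> simp [ε, *]
  have h := congrFun (slopeProx_mul_of_abs_eq_one hn hm y hε) i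
  simp only [hεy, Pi.mul_apply, ε, Function.update_self] at h
  linarith

end Slope

theorem statement16 {p : ℕ} (lam y : Fin p → ℝ)
    (hn : ∀ i, 0 ≤ lam i) (hm : Monotone lam) :
    (∀ e : Equiv.Perm (Fin p), slopeProx lam (y ∘ e) = (slopeProx lam y) ∘ e) ∧
    (∀ i, slopeProx lam y i = Real.sign (y i) * slopeProx lam (fun j => |y j|) i) := by
  refine ⟨slopeProx_comp_perm hn hm y, fun i => ?_⟩
  set ε : Fin p → ℝ := fun j => if y j < 0 then -1 else 1
  have hε (j : Fin p) : |ε j| = 1 := by by_cases h : y j < 0 <;> simp [ε, h]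
  have hεy : ε * y = fun j => |y j| := by
    ext j
    by_cases h : y j < 0
    · simp [ε, h, abs_of_neg h]
    · simp [ε, h, abs_of_nonneg (not_lt.mp h)]
  rw [← hεy, slopeProx_mul_of_abs_eq_one hn hm y hε, Pi.mul_apply]
  rcases lt_trichotomy (y i) 0 with h | h | h
  · simp [ε, h, Real.sign_of_neg h]
  · simp [h, slopeProx_apply_eq_zero hn hm h]
  · simp [ε, h.not_gt, Real.sign_of_pos h]
end
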